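/- Fix real parameters M_m > 0, v_{m1} < v_{m2}, v_{r2}, and set c := v_{r2} − v_{m2} + v_{m1}. For every U < c, the partial derivative ∂R_m/∂U exists at (U, c) and satisfies −2·(∂R_m/∂U)(U, c) = 1. (Hence the conformal factor A_m := −2·∂R_m/∂U of the middle region equals 1 along the first shell V = c, matching the flat value A_l = 1 of the inner Minkowski region, i.e., the metric coefficient A is continuous across the first shell.) -/

import Mathlib

/-- `f x = (x - 1) * exp x`; in the paper this is `κ⁻¹`. -/
noncomputable def f (x : ℝ) : ℝ := (x - 1) * Real.exp x

/-- The Kruskal function `κ`, the inverse of the restriction of `f` to `(0, ∞)`. -/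
noncomputable def kappa (z : ℝ) : ℝ := Function.invFunOn f (Set.Ioi 0) z

/-! On the shell `V = c` the exponential factor is `1`, so `R_m(U, c) = 2 M κ(f((c - U)/(4M)))`,
which is `(c - U)/2` as soon as `(c - U)/(4M) > 0`, since `κ` inverts `f` on `(0, ∞)`.
Hence `∂R_m/∂U = -1/2` along the shell. -/

lemma hasDerivAt_f (x : ℝ) : HasDerivAt f (x * Real.exp x) x := by
  have h : HasDerivAt (fun y => (y - 1) * Real.exp y)
      (1 * Real.exp x + (x - 1) * Real.exp x) x :=
    ((hasDerivAt_id' x).sub_const 1).mul (Real.hasDerivAt_exp x)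
  rwa [← add_mul, add_sub_cancel] at h

lemma strictMonoOn_f : StrictMonoOn f (Set.Ici 0) := by
  refine strictMonoOn_of_deriv_pos (convex_Ici 0)
    (fun x _ => (hasDerivAt_f x).continuousAt.continuousWithinAt) fun x hx => ?_
  rw [interior_Ici] at hx
  rw [(hasDerivAt_f x).deriv]
  exact mul_pos hx (Real.exp_pos x)

lemma kappa_f {x : ℝ} (hx : 0 < x) : kappa (f x) = x :=
  (strictMonoOn_f.injOn.mono Set.Ioi_subset_Ici_self).leftInvOn_invFunOn hx

lemma two_mul_kappa_f_div {M u c : ℝ} (hM : 0 < M) (hu : u < c) :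
    2 * M * kappa (f ((c - u) / (4 * M))) = (c - u) / 2 := by
  rw [kappa_f (div_pos (sub_pos.mpr hu) (by positivity))]
  field_simp
  ring

theorem conformal_factor_continuous_across_first_shell_general (Mm c : ℝ)
    (hM : Mm > 0)
    (Rm : ℝ → ℝ → ℝ)
    (hRm : ∀ U V : ℝ,
      Rm U V = 2 * Mm * kappa (Real.exp ((V - c) / (4 * Mm)) * f ((c - U) / (4 * Mm)))) :
    ∀ U < c, ∃ d : ℝ, HasDerivAt (fun u => Rm u c) d U ∧ -2 * d = 1 := by
  intro U hU
  have hRm_shell : (fun u => Rm u c) =ᶠ[nhds U] fun u => (c - u) / 2 := by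
    filter_upwards [Iio_mem_nhds hU] with u hu
    rw [hRm, sub_self, zero_div, Real.exp_zero, one_mul, two_mul_kappa_f_div hM hu]
  refine ⟨-1 / 2, ?_, by norm_num⟩
  exact (((hasDerivAt_id U).const_sub c).div_const 2).congr_of_eventuallyEq hRm_shell

theorem conformal_factor_continuous_across_first_shell (Mm vm1 vm2 vr2 c : ℝ)
    (hM : Mm > 0) (hv : vm1 < vm2) (hc : c = vr2 - vm2 + vm1)
    (Rm : ℝ → ℝ → ℝ)
    (hRm : ∀ U V : ℝ,
      Rm U V = 2 * Mm * kappa (Real.exp ((V - c) / (4 * Mm)) * f ((c - U) / (4 * Mm)))) :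
    ∀ U < c, ∃ d : ℝ, HasDerivAt (fun u => Rm u c) d U ∧ -2 * d = 1 :=
  conformal_factor_continuous_across_first_shell_general Mm c hM Rm hRm
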